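/- Let (Ω, ℱ, P) be a probability space, let f : ℝ^d → ℝ be differentiable and L-smooth with L > 0, and suppose f satisfies the PL condition with parameter μ > 0 and value f*, i.e. ‖∇f(x)‖² ≥ 2μ(f(x) − f*) ≥ 0 for all x ∈ ℝ^d. Let p ∈ (0, 1], b' > 0, and let η > 0 satisfy μη ≤ p/2 and 1/(2η) − L/2 − ((1 − p) η L²)/(p b') ≥ 0. Let x⁰ ∈ ℝ^d and let x_t, g_t : Ω → ℝ^d (t = 0, 1, 2, …) be measurable with x_0 = x⁰, g_0 = ∇f(x⁰) almost surely, x_{t+1} = x_t − η g_t almost surely, and suppose f ∘ x_t, ‖g_t − ∇f(x_t)‖² and ‖x_{t+1} − x_t‖² are integrable for every t. Assume that for every t ≥ 0 the estimator recursion E‖g_{t+1} − ∇f(x_{t+1})‖² ≤ ((1 − p) L²/b') · E‖x_{t+1} − x_t‖² + (1 − p) · E‖g_t − ∇f(x_t)‖² holds. Then for every integer T ≥ 0, E[f(x_T)] − f* ≤ (1 − μη)^T (f(x⁰) − f*). -/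

import Mathlib

/-!
Smoothness gives the descent inequality `f y ≤ f x + ⟪∇f x, y - x⟫ + L/2 ‖y - x‖²`; applied to the
step `y = x - η g` and combined with the polarization identity and the PL inequality, it bounds the
optimality gap after one step by `(1 - μη)` times the old gap, plus `η/2` times the estimator
variance `‖g - ∇f x‖²`, minus `(1/(2η) - L/2) ‖y - x‖²`. Taking expectations and adding `η/p` times
the variance recursion, the stepsize conditions make `Φ_t = E f(x_t) - f* + (η/p) E‖g_t - ∇f(x_t)‖²`
contract by `1 - μη` at each step, and `Φ_0 = f(x⁰) - f*` because `g_0` is the exact gradient.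
-/

open MeasureTheory
open scoped RealInnerProductSpace

section Smooth

variable {F : Type*} [NormedAddCommGroup F] [InnerProductSpace ℝ F] [CompleteSpace F]
  {f : F → ℝ} {L μ fstar η : ℝ}

theorem le_add_inner_gradient_add_sq (hf : Differentiable ℝ f)
    (hsmooth : ∀ x y, ‖gradient f x - gradient f y‖ ≤ L * ‖x - y‖) (x y : F) :
    f y ≤ f x + ⟪gradient f x, y - x⟫ + L / 2 * ‖y - x‖ ^ 2 := by
  set v := y - x
  have hderiv : ∀ t : ℝ,
      HasDerivAt (fun s : ℝ => f (x + s • v)) ⟪gradient f (x + t • v), v⟫ t := by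
    intro t
    have hline : HasDerivAt (fun s : ℝ => x + s • v) v t := by
      simpa using ((hasDerivAt_id t).smul_const v).const_add x
    simpa [InnerProductSpace.toDual_apply_apply, Function.comp_def] using
      (hf (x + t • v)).hasGradientAt.hasFDerivAt.comp_hasDerivAt t hline
  have hquad : ∀ t : ℝ,
      HasDerivAt (fun s : ℝ => f x + s * ⟪gradient f x, v⟫ + L / 2 * s ^ 2 * ‖v‖ ^ 2)
        (⟪gradient f x, v⟫ + L * t * ‖v‖ ^ 2) t := by
    intro t
    refine ((((hasDerivAt_id t).mul_const ⟪gradient f x, v⟫).const_add (f x)).add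
      (((hasDerivAt_pow 2 t).const_mul (L / 2)).mul_const (‖v‖ ^ 2))).congr_deriv
      (by push_cast; ring)
  have hslope : ∀ t ∈ Set.Ico (0 : ℝ) 1,
      ⟪gradient f (x + t • v), v⟫ ≤ ⟪gradient f x, v⟫ + L * t * ‖v‖ ^ 2 := by
    rintro t ⟨ht0, -⟩
    have hlip : ⟪gradient f (x + t • v) - gradient f x, v⟫ ≤ L * t * ‖v‖ ^ 2 :=
      calc _ ≤ ‖gradient f (x + t • v) - gradient f x‖ * ‖v‖ := real_inner_le_norm _ _
        _ ≤ L * ‖t • v‖ * ‖v‖ := by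
          gcongr
          simpa using hsmooth (x + t • v) x
        _ = L * t * ‖v‖ ^ 2 := by rw [norm_smul, Real.norm_of_nonneg ht0]; ring
    rw [inner_sub_left] at hlip
    linarith
  have := image_le_of_deriv_right_le_deriv_boundary
    (fun t _ => (hderiv t).continuousAt.continuousWithinAt)
    (fun t _ => (hderiv t).hasDerivWithinAt) (by simp) (fun t _ => (hquad t).continuousAt.continuousWithinAt)
    (fun t _ => (hquad t).hasDerivWithinAt) hslope (Set.right_mem_Icc.2 zero_le_one)
  simpa [v] using this

theorem apply_sub_smul_le (hf : Differentiable ℝ f)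
    (hsmooth : ∀ x y, ‖gradient f x - gradient f y‖ ≤ L * ‖x - y‖) (hη : 0 < η) (x g : F) :
    f (x - η • g) ≤ f x - η / 2 * ‖gradient f x‖ ^ 2 + η / 2 * ‖g - gradient f x‖ ^ 2
      - (1 / (2 * η) - L / 2) * ‖η • g‖ ^ 2 := by
  have hdesc := le_add_inner_gradient_add_sq hf hsmooth x (x - η • g)
  -- polarization: `-⟪∇f x, g⟫ = (‖g - ∇f x‖² - ‖g‖² - ‖∇f x‖²) / 2`
  have hpol := norm_sub_sq_real g (gradient f x)
  rw [sub_sub_cancel_left, inner_neg_right, norm_neg, real_inner_smul_right] at hdesc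
  rw [real_inner_comm] at hpol
  have hstep : (1 / (2 * η) - L / 2) * ‖η • g‖ ^ 2 = η / 2 * ‖g‖ ^ 2 - L / 2 * ‖η • g‖ ^ 2 := by
    rw [norm_smul, Real.norm_of_nonneg hη.le]
    field_simp
  linear_combination hdesc - η / 2 * hpol + hstep

theorem apply_sub_smul_sub_le_of_pl (hf : Differentiable ℝ f)
    (hsmooth : ∀ x y, ‖gradient f x - gradient f y‖ ≤ L * ‖x - y‖)
    (hpl : ∀ x, ‖gradient f x‖ ^ 2 ≥ 2 * μ * (f x - fstar)) (hη : 0 < η) (x g : F) :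
    f (x - η • g) - fstar ≤ (1 - μ * η) * (f x - fstar) + η / 2 * ‖g - gradient f x‖ ^ 2
      - (1 / (2 * η) - L / 2) * ‖η • g‖ ^ 2 := by
  nlinarith [apply_sub_smul_le hf hsmooth hη x g, mul_le_mul_of_nonneg_left (hpl x) hη.le]

theorem integral_sub_le_of_pl {Ω : Type*} [MeasurableSpace Ω] {P : Measure Ω}
    [IsProbabilityMeasure P] (hf : Differentiable ℝ f)
    (hsmooth : ∀ x y, ‖gradient f x - gradient f y‖ ≤ L * ‖x - y‖)
    (hpl : ∀ x, ‖gradient f x‖ ^ 2 ≥ 2 * μ * (f x - fstar)) (hη : 0 < η) {x x' g : Ω → F}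
    (hstep : ∀ᵐ ω ∂P, x' ω = x ω - η • g ω)
    (hfx : Integrable (fun ω => f (x ω)) P) (hfx' : Integrable (fun ω => f (x' ω)) P)
    (hD : Integrable (fun ω => ‖g ω - gradient f (x ω)‖ ^ 2) P)
    (hX : Integrable (fun ω => ‖x' ω - x ω‖ ^ 2) P) :
    ∫ ω, f (x' ω) ∂P - fstar ≤ (1 - μ * η) * (∫ ω, f (x ω) ∂P - fstar)
      + η / 2 * ∫ ω, ‖g ω - gradient f (x ω)‖ ^ 2 ∂P
      - (1 / (2 * η) - L / 2) * ∫ ω, ‖x' ω - x ω‖ ^ 2 ∂P := by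
  have hpt : ∀ᵐ ω ∂P, f (x' ω) - fstar ≤ (1 - μ * η) * (f (x ω) - fstar)
      + η / 2 * ‖g ω - gradient f (x ω)‖ ^ 2 - (1 / (2 * η) - L / 2) * ‖x' ω - x ω‖ ^ 2 := by
    filter_upwards [hstep] with ω hω
    rw [hω, sub_sub_cancel_left, norm_neg]
    exact apply_sub_smul_sub_le_of_pl hf hsmooth hpl hη (x ω) (g ω)
  have hgap : Integrable (fun ω => (1 - μ * η) * (f (x ω) - fstar)) P :=
    (hfx.sub (integrable_const fstar)).const_mul _
  have hgap_var : Integrable (fun ω => (1 - μ * η) * (f (x ω) - fstar)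
      + η / 2 * ‖g ω - gradient f (x ω)‖ ^ 2) P :=
    hgap.add (hD.const_mul _)
  have hmono : ∫ ω, (f (x' ω) - fstar) ∂P ≤ ∫ ω, ((1 - μ * η) * (f (x ω) - fstar)
      + η / 2 * ‖g ω - gradient f (x ω)‖ ^ 2 - (1 / (2 * η) - L / 2) * ‖x' ω - x ω‖ ^ 2) ∂P :=
    integral_mono_ae (hfx'.sub (integrable_const fstar))
      (hgap_var.sub (hX.const_mul _)) hpt
  rwa [integral_sub hgap_var (hX.const_mul _), integral_add hgap (hD.const_mul _),
    integral_const_mul, integral_const_mul, integral_const_mul,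
    integral_sub hfx' (integrable_const fstar), integral_sub hfx (integrable_const fstar),
    integral_const, probReal_univ, one_smul] at hmono

end Smooth

section Lyapunov

variable {a D X : ℕ → ℝ} {μ η p K C : ℝ}

theorem lyapunov_succ_le (hp : 0 < p) (hη : 0 < η) (hμη : μ * η ≤ p / 2) (hKC : η / p * K ≤ C)
    (hD : ∀ t, 0 ≤ D t) (hX : ∀ t, 0 ≤ X t)
    (ha_succ : ∀ t, a (t + 1) ≤ (1 - μ * η) * a t + η / 2 * D t - C * X t)
    (hD_succ : ∀ t, D (t + 1) ≤ K * X t + (1 - p) * D t) (t : ℕ) :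
    a (t + 1) + η / p * D (t + 1) ≤ (1 - μ * η) * (a t + η / p * D t) := by
  have hηp : 0 ≤ η / p := (div_pos hη hp).le
  have hDcoef : η / 2 + η / p * (1 - p) ≤ (1 - μ * η) * (η / p) := by
    have : (1 - μ * η) * (η / p) - (η / 2 + η / p * (1 - p)) = η / p * (p / 2 - μ * η) := by
      field_simp
      ring
    nlinarith [mul_nonneg hηp (sub_nonneg.2 hμη)]
  nlinarith [ha_succ t, mul_le_mul_of_nonneg_left (hD_succ t) hηp,
    mul_le_mul_of_nonneg_right hKC (hX t), mul_le_mul_of_nonneg_right hDcoef (hD t)]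

theorem le_pow_mul_of_lyapunov (hp : 0 < p) (hp1 : p ≤ 1) (hη : 0 < η) (hμη : μ * η ≤ p / 2)
    (hKC : η / p * K ≤ C) (hD : ∀ t, 0 ≤ D t) (hX : ∀ t, 0 ≤ X t) (hD0 : D 0 = 0)
    (ha_succ : ∀ t, a (t + 1) ≤ (1 - μ * η) * a t + η / 2 * D t - C * X t)
    (hD_succ : ∀ t, D (t + 1) ≤ K * X t + (1 - p) * D t) (T : ℕ) :
    a T ≤ (1 - μ * η) ^ T * a 0 := by
  have hΦ := le_geom (u := fun t => a t + η / p * D t) (by linarith) T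
    fun t _ => lyapunov_succ_le hp hη hμη hKC hD hX ha_succ hD_succ t
  have : 0 ≤ η / p * D T := mul_nonneg (div_pos hη hp).le (hD T)
  simp only [hD0, mul_zero, add_zero] at hΦ
  linarith

end Lyapunov

theorem stmt_12_general {Ω : Type*} [MeasurableSpace Ω] (P : Measure Ω) [IsProbabilityMeasure P]
    (d : ℕ) (f : EuclideanSpace ℝ (Fin d) → ℝ) (L : ℝ)
    (hf : Differentiable ℝ f)
    (hsmooth : ∀ x y : EuclideanSpace ℝ (Fin d),
      ‖gradient f x - gradient f y‖ ≤ L * ‖x - y‖)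
    (μ fstar : ℝ)
    (hpl : ∀ x : EuclideanSpace ℝ (Fin d), ‖gradient f x‖ ^ 2 ≥ 2 * μ * (f x - fstar))
    (p : ℝ) (hp0 : 0 < p) (hp1 : p ≤ 1) (b' : ℝ)
    (η : ℝ) (hη0 : 0 < η) (hη1 : μ * η ≤ p / 2)
    (hη2 : 1 / (2 * η) - L / 2 - ((1 - p) * η * L ^ 2) / (p * b') ≥ 0)
    (x0 : EuclideanSpace ℝ (Fin d))
    (x g : ℕ → Ω → EuclideanSpace ℝ (Fin d))
    (hx0 : ∀ᵐ ω ∂P, x 0 ω = x0)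
    (hg0 : ∀ᵐ ω ∂P, g 0 ω = gradient f x0)
    (hupd : ∀ t, ∀ᵐ ω ∂P, x (t + 1) ω = x t ω - η • g t ω)
    (hint1 : ∀ t, Integrable (fun ω => f (x t ω)) P)
    (hint3 : ∀ t, Integrable (fun ω => ‖g t ω - gradient f (x t ω)‖ ^ 2) P)
    (hint4 : ∀ t, Integrable (fun ω => ‖x (t + 1) ω - x t ω‖ ^ 2) P)
    (hrec : ∀ t, ∫ ω, ‖g (t + 1) ω - gradient f (x (t + 1) ω)‖ ^ 2 ∂P
        ≤ ((1 - p) * L ^ 2 / b') * ∫ ω, ‖x (t + 1) ω - x t ω‖ ^ 2 ∂P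
          + (1 - p) * ∫ ω, ‖g t ω - gradient f (x t ω)‖ ^ 2 ∂P) :
    ∀ T : ℕ, (∫ ω, f (x T ω) ∂P) - fstar ≤ (1 - μ * η) ^ T * (f x0 - fstar) := by
  have hKC : η / p * ((1 - p) * L ^ 2 / b') ≤ 1 / (2 * η) - L / 2 := by
    have : η / p * ((1 - p) * L ^ 2 / b') = (1 - p) * η * L ^ 2 / (p * b') := by ring
    linarith
  have hgap0 : ∫ ω, f (x 0 ω) ∂P = f x0 := by
    rw [integral_congr_ae (hx0.mono fun ω h => congrArg f h), integral_const, probReal_univ,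
      one_smul]
  have hvar0 : ∫ ω, ‖g 0 ω - gradient f (x 0 ω)‖ ^ 2 ∂P = 0 := by
    refine integral_eq_zero_of_ae ?_
    filter_upwards [hx0, hg0] with ω hx hg
    simp [hx, hg]
  intro T
  simpa only [hgap0] using le_pow_mul_of_lyapunov (a := fun t => ∫ ω, f (x t ω) ∂P - fstar)
    hp0 hp1 hη0 hη1 hKC (fun t => integral_nonneg fun ω => by positivity)
    (fun t => integral_nonneg fun ω => by positivity) hvar0
    (fun t => integral_sub_le_of_pl hf hsmooth hpl hη0 (hupd t) (hint1 t) (hint1 (t + 1))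
      (hint3 t) (hint4 t))
    hrec T

theorem stmt_12 {Ω : Type*} [MeasurableSpace Ω] (P : Measure Ω) [IsProbabilityMeasure P]
    (d : ℕ) (f : EuclideanSpace ℝ (Fin d) → ℝ) (L : ℝ) (hL : 0 < L)
    (hf : Differentiable ℝ f)
    (hsmooth : ∀ x y : EuclideanSpace ℝ (Fin d),
      ‖gradient f x - gradient f y‖ ≤ L * ‖x - y‖)
    (μ fstar : ℝ) (hμ : 0 < μ)
    (hpl : ∀ x : EuclideanSpace ℝ (Fin d), ‖gradient f x‖ ^ 2 ≥ 2 * μ * (f x - fstar))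
    (hpl0 : ∀ x : EuclideanSpace ℝ (Fin d), 2 * μ * (f x - fstar) ≥ 0)
    (p : ℝ) (hp0 : 0 < p) (hp1 : p ≤ 1) (b' : ℝ) (hb' : 0 < b')
    (η : ℝ) (hη0 : 0 < η) (hη1 : μ * η ≤ p / 2)
    (hη2 : 1 / (2 * η) - L / 2 - ((1 - p) * η * L ^ 2) / (p * b') ≥ 0)
    (x0 : EuclideanSpace ℝ (Fin d))
    (x g : ℕ → Ω → EuclideanSpace ℝ (Fin d))
    (hxm : ∀ t, Measurable (x t)) (hgm : ∀ t, Measurable (g t))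
    (hx0 : ∀ᵐ ω ∂P, x 0 ω = x0)
    (hg0 : ∀ᵐ ω ∂P, g 0 ω = gradient f x0)
    (hupd : ∀ t, ∀ᵐ ω ∂P, x (t + 1) ω = x t ω - η • g t ω)
    (hint1 : ∀ t, Integrable (fun ω => f (x t ω)) P)
    (hint3 : ∀ t, Integrable (fun ω => ‖g t ω - gradient f (x t ω)‖ ^ 2) P)
    (hint4 : ∀ t, Integrable (fun ω => ‖x (t + 1) ω - x t ω‖ ^ 2) P)
    (hrec : ∀ t, ∫ ω, ‖g (t + 1) ω - gradient f (x (t + 1) ω)‖ ^ 2 ∂P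
        ≤ ((1 - p) * L ^ 2 / b') * ∫ ω, ‖x (t + 1) ω - x t ω‖ ^ 2 ∂P
          + (1 - p) * ∫ ω, ‖g t ω - gradient f (x t ω)‖ ^ 2 ∂P) :
    ∀ T : ℕ, (∫ ω, f (x T ω) ∂P) - fstar ≤ (1 - μ * η) ^ T * (f x0 - fstar) :=
  stmt_12_general P d f L hf hsmooth μ fstar hpl p hp0 hp1 b' η hη0 hη1 hη2 x0 x g hx0 hg0 hupd
    hint1 hint3 hint4 hrec
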